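/- For the star graph S_n on n ≥ 2 vertices and any detection probability parameter p ∈ [0,1], the performance measure satisfies μ(S_n) = (n − 2p)/(2n). -/

import Mathlib

open SimpleGraph Finset
open scoped Classical

/-- Total distance: sum of geodesic distances over all ordered pairs of vertices. -/
noncomputable def totalDist {n : ℕ} (g : SimpleGraph (Fin n)) : ℕ :=
  ∑ i : Fin n, ∑ j : Fin n, g.dist i j

/-- Information measure K(g) = n(n-1)/T(g). -/
noncomputable def infoMeasure {n : ℕ} (g : SimpleGraph (Fin n)) : ℝ :=
  ((n : ℝ) * ((n : ℝ) - 1)) / (totalDist g : ℝ)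

/-- Secrecy measure H(g) = (1/n) Σ_i u_i with u_i = 1 - (p d_i + 1)/n. -/
noncomputable def secrecy {n : ℕ} (g : SimpleGraph (Fin n)) (p : ℝ) : ℝ :=
  (1 / (n : ℝ)) * ∑ i : Fin n, (1 - (p * (g.degree i : ℝ) + 1) / (n : ℝ))

/-- Performance measure μ(g) = H(g) · K(g). -/
noncomputable def perf {n : ℕ} (g : SimpleGraph (Fin n)) (p : ℝ) : ℝ :=
  secrecy g p * infoMeasure g

/-- Star graph on `Fin n`: vertex 0 adjacent to all others, no other edges. -/
def starGraph (n : ℕ) : SimpleGraph (Fin n) where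
  Adj i j := i ≠ j ∧ ((i : ℕ) = 0 ∨ (j : ℕ) = 0)
  symm := ⟨fun i j h => ⟨h.1.symm, h.2.symm⟩⟩
  loopless := ⟨fun i h => h.1 rfl⟩

/-!
In a graph of diameter at most 2, two distinct vertices are at distance 1 or 2 according as they
are adjacent or not, so `T(g) = 2n(n - 1) - ∑ dᵢ`. The star is a tree of diameter 2, hence
`∑ dᵢ = 2(n - 1)` and `T(Sₙ) = 2(n - 1)²`, while `H(g) = (n(n - 1) - p ∑ dᵢ) / n²` for every graph.
-/

namespace SimpleGraph

variable {V : Type*} {G : SimpleGraph V}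

lemma dist_add_ite_adj_of_ediam_le_two [DecidableEq V] [DecidableRel G.Adj] (hG : G.ediam ≤ 2)
    (u v : V) : G.dist u v + (if G.Adj u v then 1 else 0) = if u = v then 0 else 2 := by
  have huv : G.edist u v ≤ 2 := edist_le_ediam.trans hG
  have hreach : G.Reachable u v := reachable_of_edist_ne_top (ne_top_of_le_ne_top (by simp) huv)
  by_cases heq : u = v
  · simp [heq]
  by_cases hadj : G.Adj u v
  · simp [heq, hadj, dist_eq_one_iff_adj.mpr hadj]
  have hle : G.dist u v ≤ 2 := by exact_mod_cast hreach.coe_dist_eq_edist ▸ huv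
  have hgt := hreach.one_lt_dist_of_ne_of_not_adj heq hadj
  simp only [hadj, heq, if_false]
  omega

lemma sum_dist_add_degree_of_ediam_le_two [Fintype V] [DecidableEq V] [DecidableRel G.Adj]
    (hG : G.ediam ≤ 2) (u : V) : ∑ v, G.dist u v + G.degree u = 2 * (Fintype.card V - 1) := by
  rw [← card_neighborFinset_eq_degree, neighborFinset_eq_filter, card_filter, ← sum_add_distrib,
    sum_congr rfl fun v _ ↦ dist_add_ite_adj_of_ediam_le_two hG u v, sum_ite, sum_const_zero,
    sum_const, filter_ne, card_erase_of_mem (mem_univ u), card_univ, smul_eq_mul, zero_add, mul_comm]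

lemma IsTree.sum_degrees_add_two [Fintype V] [DecidableRel G.Adj] (hG : G.IsTree) :
    ∑ v, G.degree v + 2 = 2 * Fintype.card V := by
  rw [sum_degrees_eq_twice_card_edges, ← hG.card_edgeFinset]
  ring

lemma ediam_starGraph_le_two (r : V) : (starGraph r).ediam ≤ 2 := by
  refine ediam_le_of_edist_le fun u v ↦ ?_
  have hu : (starGraph r).edist u r ≤ 1 := by
    rw [edist_le_one_iff_adj_or_eq, starGraph_adj]
    tauto
  have hv : (starGraph r).edist r v ≤ 1 := by
    rw [edist_le_one_iff_adj_or_eq, starGraph_adj]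
    tauto
  calc (starGraph r).edist u v ≤ (starGraph r).edist u r + (starGraph r).edist r v :=
        SimpleGraph.edist_triangle
    _ ≤ 2 := by simpa [one_add_one_eq_two] using add_le_add hu hv

end SimpleGraph

lemma totalDist_add_sum_degree_of_ediam_le_two {n : ℕ} {g : SimpleGraph (Fin n)}
    [DecidableRel g.Adj] (hg : g.ediam ≤ 2) :
    totalDist g + ∑ i, g.degree i = 2 * n * (n - 1) := by
  rw [totalDist, ← sum_add_distrib,
    sum_congr rfl fun i _ ↦ g.sum_dist_add_degree_of_ediam_le_two hg i]
  simp only [sum_const, card_univ, Fintype.card_fin, smul_eq_mul]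
  ring

lemma secrecy_eq {n : ℕ} (g : SimpleGraph (Fin n)) (p : ℝ) :
    secrecy g p = (n * (n - 1) - p * ∑ i, (g.degree i : ℝ)) / n ^ 2 := by
  rcases n.eq_zero_or_pos with rfl | hn
  · simp [secrecy]
  have hn' : (n : ℝ) ≠ 0 := by positivity
  rw [secrecy, sum_sub_distrib, ← sum_div, sum_add_distrib, ← mul_sum]
  simp only [sum_const, card_univ, Fintype.card_fin, nsmul_eq_mul, mul_one]
  field_simp
  ring

lemma starGraph_eq_starGraph_zero {n : ℕ} [NeZero n] :
    _root_.starGraph n = SimpleGraph.starGraph (0 : Fin n) := by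
  ext i j
  simp only [_root_.starGraph, SimpleGraph.starGraph_adj, Fin.val_eq_zero_iff]

theorem perf_star_general {n : ℕ} (hn : 2 ≤ n) (p : ℝ) :
    perf (starGraph n) p = ((n : ℝ) - 2 * p) / (2 * (n : ℝ)) := by
  have : NeZero n := ⟨by omega⟩
  have htree : (_root_.starGraph n).IsTree :=
    (starGraph_eq_starGraph_zero (n := n)) ▸ isTree_starGraph 0
  have hdiam : (_root_.starGraph n).ediam ≤ 2 :=
    (starGraph_eq_starGraph_zero (n := n)) ▸ ediam_starGraph_le_two 0
  have hdeg : ∑ i, ((_root_.starGraph n).degree i : ℝ) + 2 = 2 * n := by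
    exact_mod_cast htree.sum_degrees_add_two.trans (by rw [Fintype.card_fin])
  have hT : (totalDist (_root_.starGraph n) : ℝ) + ∑ i, ((_root_.starGraph n).degree i : ℝ)
      = 2 * n * (n - 1) := by
    have h := congrArg (Nat.cast (R := ℝ)) (totalDist_add_sum_degree_of_ediam_le_two hdiam)
    push_cast [Nat.cast_sub (by omega : 1 ≤ n)] at h
    exact h
  have hn1 : (n : ℝ) - 1 ≠ 0 := by
    have : (2 : ℝ) ≤ n := by exact_mod_cast hn
    linarith
  rw [perf, secrecy_eq, infoMeasure, eq_sub_of_add_eq hT, eq_sub_of_add_eq hdeg]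
  field_simp

/-- μ(S_n) = (n - 2p)/(2n) for n ≥ 2 and p ∈ [0,1]. -/
theorem perf_star {n : ℕ} (hn : 2 ≤ n) (p : ℝ) (hp0 : 0 ≤ p) (hp1 : p ≤ 1) :
    perf (starGraph n) p = ((n : ℝ) - 2 * p) / (2 * (n : ℝ)) :=
  perf_star_general hn p
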